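/- arXiv:1908.01041 — 6 statements merged into one kernel-verified Lean document; each statement's English description precedes it below -/
import Mathlib

section
/- Let p₁, q₁, q₂, q₃ be real numbers with q₁ + q₂ + q₃ = 0, and let Q₀ be the 3×3 matrix with rows (q₁, 0, 0), (0, q₂, p₁), (0, −p₁, q₃). Define A_{Q₀} ⊆ M₃(ℝ) as the ℝ-linear span of the matrices [x] + [y]Q₀ for x, y ∈ ℝ³. Set D = p₁² + 2q₂² + 5q₂q₃ + 2q₃². Then dim A_{Q₀} < 6 if and only if p₁·D = 0 and (q₂ − q₃)·D = 0, i.e., if and only if either D = 0 or (p₁ = 0 and q₂ = q₃). -/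
open Matrix

noncomputable section

/-- Partial derivative in the `j`-th coordinate direction. -/
def pd {m : ℕ} {F : Type*} [NormedAddCommGroup F] [NormedSpace ℝ F]
    (j : Fin m) (f : (Fin m → ℝ) → F) (u : Fin m → ℝ) : F :=
  fderiv ℝ f u (Pi.single j 1)

/-- The special orthogonal group SO(3), as a set of 3×3 real matrices. -/
def SO3 : Set (Matrix (Fin 3) (Fin 3) ℝ) :=
  {A | Aᵀ * A = 1 ∧ A.det = 1}

/-- The skew-symmetric matrix `[v]` associated to `v ∈ ℝ³`, with `[v] w = w × v`. -/
def crossMat (v : Fin 3 → ℝ) : Matrix (Fin 3) (Fin 3) ℝ :=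
  !![0, v 2, -(v 1); -(v 2), 0, v 0; v 1, -(v 0), 0]

/-- The Jacobian matrix of a map `x : ℝ³ → ℝ³`. -/
def jacobian (x : (Fin 3 → ℝ) → (Fin 3 → ℝ)) (u : Fin 3 → ℝ) :
    Matrix (Fin 3) (Fin 3) ℝ :=
  Matrix.of fun i j => pd j x u i

/-- `W(u) = a(u)⁻¹ · Dx(u)`, the coefficient matrix of the coframing `ω = a⁻¹ dx`. -/
def Wmat (a : (Fin 3 → ℝ) → Matrix (Fin 3) (Fin 3) ℝ)
    (x : (Fin 3 → ℝ) → (Fin 3 → ℝ)) (u : Fin 3 → ℝ) : Matrix (Fin 3) (Fin 3) ℝ :=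
  (a u)⁻¹ * jacobian x u

/-- The tableau `A_Q`: the span of the matrices `[x] + [y] Q`. -/
def tableau (Q : Matrix (Fin 3) (Fin 3) ℝ) : Submodule ℝ (Matrix (Fin 3) (Fin 3) ℝ) :=
  Submodule.span ℝ {M | ∃ x y : Fin 3 → ℝ, M = crossMat x + crossMat y * Q}

end

/-
A pair `(x, y)` lies in the kernel of `(x, y) ↦ [x] + [y] Q` exactly when `[y] Q` is skew-symmetric
and `[x] = -[y] Q`, so `dim A_Q < 6` iff `[y] Q` is skew for some `y ≠ 0`. For `Q = Q₀` this is a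
linear system in `y` that splits into the two equations `p₁ y¹ = 0`, `(q₂ - q₃) y¹ = 0` and a
`2 × 2` system in `(y², y³)` of determinant `p₁² + (q₂ - q₁)(q₃ - q₁)`, which equals `D` when
`q₁ = -q₂ - q₃`.
-/

lemma transpose_crossMat (v : Fin 3 → ℝ) : (crossMat v)ᵀ = -crossMat v := by
  ext i j; fin_cases i <;> fin_cases j <;> simp [crossMat]

@[simp]
lemma crossMat_eq_zero_iff {v : Fin 3 → ℝ} : crossMat v = 0 ↔ v = 0 := by
  refine ⟨fun h => ?_, fun h => by ext i j; fin_cases i <;> fin_cases j <;> simp [crossMat, h]⟩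
  funext i
  fin_cases i
  · simpa [crossMat] using congrFun₂ h 1 2
  · simpa [crossMat] using congrFun₂ h 0 2
  · simpa [crossMat] using congrFun₂ h 0 1

lemma exists_crossMat_eq_of_transpose_eq_neg {M : Matrix (Fin 3) (Fin 3) ℝ} (hM : Mᵀ = -M) :
    ∃ v, crossMat v = M := by
  have h := fun i j => congrFun₂ hM i j
  simp only [transpose_apply, Matrix.neg_apply] at h
  refine ⟨![M 1 2, -M 0 2, M 0 1], ?_⟩
  ext i j; fin_cases i <;> fin_cases j <;> simp [crossMat] <;> linarith [h 0 0, h 1 1, h 2 2,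
    h 0 1, h 0 2, h 1 2]

def crossMatLinear : (Fin 3 → ℝ) →ₗ[ℝ] Matrix (Fin 3) (Fin 3) ℝ where
  toFun := crossMat
  map_add' u v := by ext i j; fin_cases i <;> fin_cases j <;> simp [crossMat] <;> ring
  map_smul' c v := by ext i j; fin_cases i <;> fin_cases j <;> simp [crossMat]

def tableauMap (Q : Matrix (Fin 3) (Fin 3) ℝ) :
    (Fin 3 → ℝ) × (Fin 3 → ℝ) →ₗ[ℝ] Matrix (Fin 3) (Fin 3) ℝ :=
  crossMatLinear.coprod (LinearMap.mulRight ℝ Q ∘ₗ crossMatLinear)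

lemma tableauMap_apply (Q : Matrix (Fin 3) (Fin 3) ℝ) (v : (Fin 3 → ℝ) × (Fin 3 → ℝ)) :
    tableauMap Q v = crossMat v.1 + crossMat v.2 * Q :=
  rfl

lemma tableau_eq_range (Q : Matrix (Fin 3) (Fin 3) ℝ) :
    tableau Q = LinearMap.range (tableauMap Q) := by
  rw [tableau, ← Submodule.span_eq (LinearMap.range _), LinearMap.coe_range]
  congr 1
  ext M
  simp [tableauMap_apply, eq_comm]

lemma finrank_tableau_lt_six_iff_ker_ne_bot (Q : Matrix (Fin 3) (Fin 3) ℝ) :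
    Module.finrank ℝ (tableau Q) < 6 ↔ LinearMap.ker (tableauMap Q) ≠ ⊥ := by
  have hrank := LinearMap.finrank_range_add_finrank_ker (tableauMap Q)
  rw [Module.finrank_prod, Module.finrank_fin_fun] at hrank
  rw [tableau_eq_range, Ne, ← Submodule.finrank_eq_zero]
  omega

lemma ker_tableauMap_ne_bot_iff (Q : Matrix (Fin 3) (Fin 3) ℝ) :
    LinearMap.ker (tableauMap Q) ≠ ⊥ ↔
      ∃ y ≠ 0, (crossMat y * Q)ᵀ = -(crossMat y * Q) := by
  rw [Submodule.ne_bot_iff]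
  constructor
  · rintro ⟨⟨x, y⟩, hker, hxy⟩
    rw [LinearMap.mem_ker, tableauMap_apply, add_eq_zero_iff_eq_neg] at hker
    refine ⟨y, ?_, ?_⟩
    · rintro rfl
      simp only [crossMat_eq_zero_iff.mpr rfl, zero_mul, neg_zero, crossMat_eq_zero_iff] at hker
      exact hxy (by rw [hker, Prod.mk_zero_zero])
    · rw [neg_eq_iff_eq_neg.mp hker.symm, transpose_neg, transpose_crossMat]
  · rintro ⟨y, hy, hskew⟩
    obtain ⟨x, hx⟩ := exists_crossMat_eq_of_transpose_eq_neg
      (M := -(crossMat y * Q)) (by rw [transpose_neg, hskew])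
    refine ⟨(x, y), ?_, fun h => hy (congrArg Prod.snd h)⟩
    rw [LinearMap.mem_ker, tableauMap_apply, hx, neg_add_cancel]

lemma exists_pair_ne_zero_iff_det_eq_zero {K : Type*} [Field K] (a b c d : K) :
    (∃ u v : K, (u, v) ≠ 0 ∧ a * u + b * v = 0 ∧ c * u + d * v = 0) ↔ a * d - b * c = 0 := by
  rw [← det_fin_two_of, ← exists_mulVec_eq_zero_iff]
  constructor
  · rintro ⟨u, v, huv, hu, hv⟩
    refine ⟨![u, v], fun h => huv ?_, ?_⟩
    · simpa using congrFun h
    · ext i; fin_cases i <;> simp [mul_comm, hu, hv]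
  · rintro ⟨w, hw, h⟩
    refine ⟨w 0, w 1, fun h' => hw ?_, ?_, ?_⟩
    · simp only [Prod.mk_eq_zero] at h'
      ext i; fin_cases i <;> simp [h']
    · simpa [mulVec, dotProduct, Fin.sum_univ_two] using congrFun h 0
    · simpa [mulVec, dotProduct, Fin.sum_univ_two] using congrFun h 1

lemma crossMat_mul_transpose_eq_neg_iff (p q₁ q₂ q₃ : ℝ) (y : Fin 3 → ℝ) :
    (crossMat y * !![q₁, 0, 0; 0, q₂, p; 0, -p, q₃])ᵀ =
        -(crossMat y * !![q₁, 0, 0; 0, q₂, p; 0, -p, q₃]) ↔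
      (p * y 0 = 0 ∧ (q₂ - q₃) * y 0 = 0) ∧
        (p * y 1 + (q₂ - q₁) * y 2 = 0 ∧ (q₁ - q₃) * y 1 + p * y 2 = 0) := by
  constructor
  · intro h
    have h11 := congrFun₂ h 1 1
    have h12 := congrFun₂ h 1 2
    have h01 := congrFun₂ h 0 1
    have h02 := congrFun₂ h 0 2
    simp [crossMat, -mul_eq_mul_left_iff, -mul_eq_mul_right_iff] at h11 h12 h01 h02
    refine ⟨⟨by linarith, by linarith⟩, by linarith, by linarith⟩
  · rintro ⟨⟨h0p, h0q⟩, h1, h2⟩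
    ext i j
    fin_cases i <;> fin_cases j <;> simp [crossMat, -mul_eq_mul_left_iff, -mul_eq_mul_right_iff] <;>
      linarith

lemma exists_ne_zero_crossMat_mul_transpose_eq_neg_iff (p q₁ q₂ q₃ : ℝ) :
    (∃ y ≠ 0, (crossMat y * !![q₁, 0, 0; 0, q₂, p; 0, -p, q₃])ᵀ =
        -(crossMat y * !![q₁, 0, 0; 0, q₂, p; 0, -p, q₃])) ↔
      (p = 0 ∧ q₂ = q₃) ∨ p * p - (q₂ - q₁) * (q₁ - q₃) = 0 := by
  simp_rw [crossMat_mul_transpose_eq_neg_iff, ← exists_pair_ne_zero_iff_det_eq_zero]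
  constructor
  · rintro ⟨y, hy, ⟨h0p, h0q⟩, h12⟩
    by_cases hy0 : y 0 = 0
    · refine Or.inr ⟨y 1, y 2, fun h => hy ?_, h12⟩
      simp only [Prod.mk_eq_zero] at h
      ext i; fin_cases i <;> simp [hy0, h]
    · exact Or.inl ⟨(mul_eq_zero.mp h0p).resolve_right hy0,
        sub_eq_zero.mp ((mul_eq_zero.mp h0q).resolve_right hy0)⟩
  · rintro (⟨rfl, rfl⟩ | ⟨u, v, huv, h12⟩)
    · exact ⟨![1, 0, 0], by simp, by simp⟩
    · refine ⟨![0, u, v], fun h => huv ?_, by simpa using h12⟩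
      simpa using And.intro (congrFun h 1) (congrFun h 2)

/-- dimension criterion for the tableau of the normalized matrix `Q₀`
(from the proof of Proposition 2.3 of the paper). -/
theorem tableau_dim_lt_six_iff (p₁ q₁ q₂ q₃ : ℝ) (htr : q₁ + q₂ + q₃ = 0) :
    Module.finrank ℝ
        (tableau !![q₁, 0, 0; 0, q₂, p₁; 0, -p₁, q₃]) < 6 ↔
      (p₁ * (p₁ ^ 2 + 2 * q₂ ^ 2 + 5 * q₂ * q₃ + 2 * q₃ ^ 2) = 0 ∧
       (q₂ - q₃) * (p₁ ^ 2 + 2 * q₂ ^ 2 + 5 * q₂ * q₃ + 2 * q₃ ^ 2) = 0) := by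
  rw [finrank_tableau_lt_six_iff_ker_ne_bot, ker_tableauMap_ne_bot_iff,
    exists_ne_zero_crossMat_mul_transpose_eq_neg_iff]
  have hdet : p₁ * p₁ - (q₂ - q₁) * (q₁ - q₃) = p₁ ^ 2 + 2 * q₂ ^ 2 + 5 * q₂ * q₃ + 2 * q₃ ^ 2 := by
    obtain rfl : q₁ = -q₂ - q₃ := by linarith
    ring
  rw [hdet]
  simp only [mul_eq_zero, sub_eq_zero]
  tauto
end

section
/- Let P be an invertible real 3×3 matrix and let Z, Q be real 3×3 matrices. Then the equation ((tr Q) I₃ − Qᵀ) + (det P)⁻¹ · Z · Pᵀ = 0 holds if and only if Q = (det P)⁻¹ · (P Zᵀ − (1/2) tr(P Zᵀ) I₃). (This matrix identity characterizes the admissible integral elements of the exterior differential system: the 3-plane defined by ξ = Pη, α = QPη is an integral element if and only if Q is given by this formula, so the admissible integral elements over each point are parametrized by P ∈ GL(3,ℝ).) -/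
open Matrix

/-! Taking the trace of `(tr Q) I - Qᵀ = R` gives `(n - 1) tr Q = tr R`, so `tr Q`, and then `Q`,
can be read off from `R`; for `n = 3` the factor `1 / (n - 1)` is the `1 / 2` of the formula. -/

namespace Matrix

variable {K n : Type*} [Field K] [Fintype n] [DecidableEq n]

theorem trace_trace_smul_one_sub_transpose (Q : Matrix n n K) :
    (Q.trace • (1 : Matrix n n K) - Qᵀ).trace = (Fintype.card n - 1 : K) * Q.trace := by
  rw [trace_sub, trace_smul, trace_one, trace_transpose, smul_eq_mul]
  ring

theorem trace_smul_one_sub_transpose_eq_iff (hn : (Fintype.card n : K) ≠ 1)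
    (Q R : Matrix n n K) :
    Q.trace • (1 : Matrix n n K) - Qᵀ = R ↔
      Q = ((Fintype.card n - 1 : K)⁻¹ * R.trace) • 1 - Rᵀ := by
  have hn' : (Fintype.card n - 1 : K) ≠ 0 := sub_ne_zero.mpr hn
  constructor
  · rintro rfl
    rw [trace_trace_smul_one_sub_transpose, inv_mul_cancel_left₀ hn', transpose_sub,
      transpose_smul, transpose_one, transpose_transpose, sub_sub_cancel]
  · rintro rfl
    have htr : (((Fintype.card n - 1 : K)⁻¹ * R.trace) • (1 : Matrix n n K) - Rᵀ).trace =
        (Fintype.card n - 1 : K)⁻¹ * R.trace := by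
      rw [trace_sub, trace_smul, trace_one, trace_transpose, smul_eq_mul]
      field_simp
      ring
    rw [htr, transpose_sub, transpose_smul, transpose_one, transpose_transpose, sub_sub_cancel]

end Matrix

theorem integral_element_Q_formula_general (P Z Q : Matrix (Fin 3) (Fin 3) ℝ) :
    (Q.trace • (1 : Matrix (Fin 3) (Fin 3) ℝ) - Qᵀ) + (P.det)⁻¹ • (Z * Pᵀ) = 0 ↔
      Q = (P.det)⁻¹ • (P * Zᵀ - ((1 / 2) * (P * Zᵀ).trace) • 1) := by
  have hZP : (Z * Pᵀ)ᵀ = P * Zᵀ := by rw [transpose_mul, transpose_transpose]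
  rw [add_eq_zero_iff_eq_neg, trace_smul_one_sub_transpose_eq_iff (by norm_num)]
  simp only [Fintype.card_fin, trace_neg, trace_smul, transpose_neg, transpose_smul, hZP,
    ← trace_transpose (Z * Pᵀ), smul_eq_mul, Nat.cast_ofNat]
  convert Iff.rfl using 2
  module

/-- characterization of admissible integral elements
(the computational heart of Proposition 2.2 of the paper). -/
theorem integral_element_Q_formula (P Z Q : Matrix (Fin 3) (Fin 3) ℝ)
    (hP : IsUnit P.det) :
    (Q.trace • (1 : Matrix (Fin 3) (Fin 3) ℝ) - Qᵀ) + (P.det)⁻¹ • (Z * Pᵀ) = 0 ↔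
      Q = (P.det)⁻¹ • (P * Zᵀ - ((1 / 2) * (P * Zᵀ).trace) • 1) :=
  integral_element_Q_formula_general P Z Q
end

section
/- Let U ⊆ ℝ³ be open, let x : U → ℝ³ be a smooth map whose Jacobian matrix Dx(u) is invertible for every u ∈ U, and let a : U → SO(3) be smooth. Define W : U → M₃(ℝ) by W(u) = a(u)⁻¹ · Dx(u), so that ωⁱ = Σ_j W_{ij} du^j (i = 1,2,3) is a coframing on U with flat associated metric. If dω² = dω³ = 0, i.e., ∂_j W_{ik} = ∂_k W_{ij} on U for i ∈ {2,3} and all j, k, then ω¹ ∧ dω¹ = 0, i.e., W_{11}·(∂₂W_{13} − ∂₃W_{12}) + W_{12}·(∂₃W_{11} − ∂₁W_{13}) + W_{13}·(∂₁W_{12} − ∂₂W_{11}) = 0 identically on U. -/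
open Matrix

/-!
Write `ω = a⁻¹ dx` and `θ = aᵀ da`. Then `θ` is skew, `dω = -θ ∧ ω` and `dθ = -θ ∧ θ`.
On `ℝ³` a 1-form is its vector of coefficients, `∧` of two 1-forms is the cross product and
`d` is the curl. The equations `dω² = dω³ = 0` force `θ²₃ = f ω¹` and `ω¹ ∧ dω¹ = -2f vol`.
Differentiating `θ²₃ ∧ ω¹ = 0` and using `dθ²₃ = θ¹₂ ∧ θ¹₃` gives `f² = -2f²`, hence `f = 0`.
-/

open Filter Topology

section PartialDerivative

variable {m : ℕ} {F : Type*} [NormedAddCommGroup F] [NormedSpace ℝ F] {u : Fin m → ℝ}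

theorem pd_congr_of_eventuallyEq {f g : (Fin m → ℝ) → F} (h : f =ᶠ[𝓝 u] g) (j : Fin m) :
    pd j f u = pd j g u := by
  rw [pd, pd, h.fderiv_eq]

theorem pd_const (c : F) (j : Fin m) (u : Fin m → ℝ) : pd j (fun _ => c) u = 0 := by
  simp [pd]

theorem pd_sub {f g : (Fin m → ℝ) → F} (hf : DifferentiableAt ℝ f u)
    (hg : DifferentiableAt ℝ g u) (j : Fin m) :
    pd j (fun v => f v - g v) u = pd j f u - pd j g u := by
  simp [pd, fderiv_fun_sub hf hg]

theorem pd_sum {ι : Type*} (s : Finset ι) {f : ι → (Fin m → ℝ) → F}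
    (hf : ∀ i ∈ s, DifferentiableAt ℝ (f i) u) (j : Fin m) :
    pd j (fun v => ∑ i ∈ s, f i v) u = ∑ i ∈ s, pd j (f i) u := by
  simp [pd, fderiv_fun_sum hf]

theorem pd_mul {f g : (Fin m → ℝ) → ℝ} (hf : DifferentiableAt ℝ f u)
    (hg : DifferentiableAt ℝ g u) (j : Fin m) :
    pd j (fun v => f v * g v) u = pd j f u * g u + f u * pd j g u := by
  simp only [pd, fderiv_fun_mul hf hg, _root_.add_apply, _root_.smul_apply, smul_eq_mul]
  ring

theorem pd_apply {n : ℕ} {f : (Fin m → ℝ) → Fin n → ℝ} (hf : DifferentiableAt ℝ f u)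
    (i : Fin n) (j : Fin m) : pd j (fun v => f v i) u = pd j f u i := by
  simp [pd, fderiv_pi (differentiableAt_pi.mp hf)]

theorem ContDiffAt.pd {n : WithTop ℕ∞} {f : (Fin m → ℝ) → F} (hf : ContDiffAt ℝ (n + 1) f u)
    (j : Fin m) : ContDiffAt ℝ n (pd j f) u :=
  hf.fderiv_right_succ.clm_apply contDiffAt_const

theorem pd_comm {f : (Fin m → ℝ) → F} (hf : ContDiffAt ℝ 2 f u) (j k : Fin m) :
    pd j (pd k f) u = pd k (pd j f) u := by
  have hd : DifferentiableAt ℝ (fderiv ℝ f) u :=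
    (hf.fderiv_right_succ (n := 1)).differentiableAt one_ne_zero
  have hsymm := hf.isSymmSndFDerivAt (by simp)
  unfold pd
  rw [fderiv_clm_apply hd (differentiableAt_const _),
    fderiv_clm_apply hd (differentiableAt_const _)]
  simp [hsymm (Pi.single j 1)]

end PartialDerivative

noncomputable section MatrixDerivative

variable {m : ℕ} {u : Fin m → ℝ} {ι κ μ : Type*}

def pdMat (l : Fin m) (A : (Fin m → ℝ) → Matrix ι κ ℝ) (v : Fin m → ℝ) : Matrix ι κ ℝ :=
  Matrix.of fun i j => pd l (fun w => A w i j) v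

theorem pdMat_congr_of_eventuallyEq {A B : (Fin m → ℝ) → Matrix ι κ ℝ} (h : A =ᶠ[𝓝 u] B)
    (l : Fin m) : pdMat l A u = pdMat l B u := by
  ext i j
  exact pd_congr_of_eventuallyEq (h.mono fun v hv => by rw [hv]) l

theorem pdMat_const (C : Matrix ι κ ℝ) (l : Fin m) (u : Fin m → ℝ) :
    pdMat l (fun _ => C) u = 0 := by
  ext i j
  exact pd_const _ l u

theorem pdMat_transpose (A : (Fin m → ℝ) → Matrix ι κ ℝ) (l : Fin m) :
    pdMat l (fun v => (A v)ᵀ) u = (pdMat l A u)ᵀ :=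
  rfl

variable [Fintype κ] {A : (Fin m → ℝ) → Matrix ι κ ℝ} {B : (Fin m → ℝ) → Matrix κ μ ℝ}

theorem differentiableAt_mul_apply (hA : ∀ i k, DifferentiableAt ℝ (fun v => A v i k) u)
    (hB : ∀ k j, DifferentiableAt ℝ (fun v => B v k j) u) (i : ι) (j : μ) :
    DifferentiableAt ℝ (fun v => (A v * B v) i j) u := by
  simp only [mul_apply]
  exact DifferentiableAt.fun_sum fun k _ => (hA i k).mul (hB k j)

theorem pdMat_mul (hA : ∀ i k, DifferentiableAt ℝ (fun v => A v i k) u)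
    (hB : ∀ k j, DifferentiableAt ℝ (fun v => B v k j) u) (l : Fin m) :
    pdMat l (fun v => A v * B v) u = pdMat l A u * B u + A u * pdMat l B u := by
  ext i j
  simp only [pdMat, of_apply, mul_apply, Matrix.add_apply]
  rw [pd_sum (f := fun k v => A v i k * B v k j) _ fun k _ => (hA i k).mul (hB k j),
    ← Finset.sum_add_distrib]
  exact Finset.sum_congr rfl fun k _ => pd_mul (hA i k) (hB k j) l

end MatrixDerivative

noncomputable section Connection

variable {m n : ℕ} {u : Fin m → ℝ} {a : (Fin m → ℝ) → Matrix (Fin n) (Fin n) ℝ}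

/-- `connMat a l = aᵀ ∂ₗa`; `connForm a i j` is the 1-form `θⁱⱼ = ∑ₗ (aᵀ ∂ₗa)ᵢⱼ duˡ`, given by
its vector of coefficients. -/
def connMat (a : (Fin m → ℝ) → Matrix (Fin n) (Fin n) ℝ) (l : Fin m) (v : Fin m → ℝ) :
    Matrix (Fin n) (Fin n) ℝ :=
  (a v)ᵀ * pdMat l a v

def connForm (a : (Fin m → ℝ) → Matrix (Fin n) (Fin n) ℝ) (i j : Fin n) (v : Fin m → ℝ) :
    Fin m → ℝ :=
  fun l => connMat a l v i j

variable (hO : ∀ᶠ v in 𝓝 u, (a v)ᵀ * a v = 1)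
  (ha : ∀ i j, DifferentiableAt ℝ (fun v => a v i j) u)
include hO ha

theorem connMat_transpose (l : Fin m) : (connMat a l u)ᵀ = -connMat a l u := by
  have h := pdMat_mul (A := fun v => (a v)ᵀ) (fun i k => ha k i) ha l
  rw [pdMat_congr_of_eventuallyEq hO, pdMat_const, pdMat_transpose] at h
  rw [connMat, transpose_mul, transpose_transpose]
  exact eq_neg_of_add_eq_zero_left h.symm

theorem connForm_swap (i j : Fin n) : connForm a j i u = -connForm a i j u :=
  funext fun l => by
    simpa [connForm] using congrFun (congrFun (connMat_transpose hO ha l) i) j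

theorem pdMat_transpose_mul {κ : Type*} {N : (Fin m → ℝ) → Matrix (Fin n) κ ℝ}
    (hN : ∀ i j, DifferentiableAt ℝ (fun v => N v i j) u) (l : Fin m) :
    pdMat l (fun v => (a v)ᵀ * N v) u
      = -(connMat a l u * ((a u)ᵀ * N u)) + (a u)ᵀ * pdMat l N u := by
  rw [pdMat_mul (A := fun v => (a v)ᵀ) (fun i k => ha k i) hN, pdMat_transpose]
  congr 1
  have hright : a u * (a u)ᵀ = 1 := mul_eq_one_comm.mp hO.self_of_nhds
  calc (pdMat l a u)ᵀ * N u = ((pdMat l a u)ᵀ * a u) * ((a u)ᵀ * N u) := by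
        rw [Matrix.mul_assoc, ← Matrix.mul_assoc (a u), hright, Matrix.one_mul]
    _ = (connMat a l u)ᵀ * ((a u)ᵀ * N u) := by rw [connMat, transpose_mul, transpose_transpose]
    _ = -(connMat a l u * ((a u)ᵀ * N u)) := by rw [connMat_transpose hO ha, Matrix.neg_mul]

end Connection

noncomputable section Curvature

variable {m n : ℕ} {u : Fin m → ℝ} {a : (Fin m → ℝ) → Matrix (Fin n) (Fin n) ℝ}
  (ha : ∀ i j, ContDiffAt ℝ 2 (fun v => a v i j) u)
include ha

theorem differentiableAt_pdMat_apply (l : Fin m) (i j : Fin n) :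
    DifferentiableAt ℝ (fun v => pdMat l a v i j) u :=
  ((ha i j).pd (n := 1) l).differentiableAt one_ne_zero

theorem differentiableAt_connMat_apply (l : Fin m) (i j : Fin n) :
    DifferentiableAt ℝ (fun v => connMat a l v i j) u :=
  differentiableAt_mul_apply (A := fun v => (a v)ᵀ)
    (fun i k => (ha k i).differentiableAt (by norm_num)) (differentiableAt_pdMat_apply ha l) i j

theorem pdMat_pdMat_comm (l l' : Fin m) : pdMat l (pdMat l' a) u = pdMat l' (pdMat l a) u := by
  ext i j
  exact pd_comm (ha i j) l l'

theorem pdMat_connMat (hO : ∀ᶠ v in 𝓝 u, (a v)ᵀ * a v = 1) (l l' : Fin m) :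
    pdMat l (connMat a l') u
      = -(connMat a l u * connMat a l' u) + (a u)ᵀ * pdMat l (pdMat l' a) u :=
  pdMat_transpose_mul hO (fun i j => (ha i j).differentiableAt (by norm_num))
    (differentiableAt_pdMat_apply ha l') l

end Curvature

theorem triple_product_smul {R : Type*} [CommRing R] (u v w x : Fin 3 → R) :
    (u ⬝ᵥ v ⨯₃ w) • x = (x ⬝ᵥ v ⨯₃ w) • u + (x ⬝ᵥ w ⨯₃ u) • v + (x ⬝ᵥ u ⨯₃ v) • w := by
  ext i
  fin_cases i <;>
  · simp only [cross_apply, dotProduct, Fin.sum_univ_three, Fin.isValue, Fin.zero_eta, Fin.mk_one,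
      Fin.reduceFinMk, cons_val, Pi.add_apply, Pi.smul_apply, smul_eq_mul]
    ring

theorem det_eq_dotProduct_cross {R : Type*} [CommRing R] (W : Matrix (Fin 3) (Fin 3) R) :
    W.det = W 0 ⬝ᵥ W 1 ⨯₃ W 2 := by
  rw [triple_product_eq_det]
  congr
  ext i j
  fin_cases i <;> rfl

/- At a point, `W i` is the coframe `ωⁱ⁺¹` and `θ i j` the connection form `θⁱ⁺¹ⱼ₊₁`, so that
`∑ p, θ i p ⨯₃ W p` encodes `-dωⁱ⁺¹` and `∑ p, θ i p ⨯₃ θ p j` encodes `-dθⁱ⁺¹ⱼ₊₁`. -/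
section StructureEquations

variable {θ : Fin 3 → Fin 3 → Fin 3 → ℝ} {W : Matrix (Fin 3) (Fin 3) ℝ}
  (hθ : ∀ i j, θ j i = -θ i j) (hW : W.det ≠ 0)
  (h₁ : ∑ p, θ 1 p ⨯₃ W p = 0) (h₂ : ∑ p, θ 2 p ⨯₃ W p = 0)
include hθ hW h₁ h₂

theorem cross_row_eq_zero_of_sum_cross_eq_zero : θ 1 2 ⨯₃ W 0 = 0 := by
  have hdiag : ∀ i, θ i i = 0 := fun i => self_eq_neg.mp (hθ i i)
  rw [Fin.sum_univ_three, hθ 0 1, hdiag] at h₁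
  rw [Fin.sum_univ_three, hθ 0 2, hθ 1 2, hdiag] at h₂
  have hr₂ : θ 1 2 ⬝ᵥ W 2 ⨯₃ W 0 = 0 := by
    have := congrArg (W 0 ⬝ᵥ ·) h₁
    simpa [dotProduct_add, triple_product_permutation (W 0)] using this
  have hr₁ : θ 1 2 ⬝ᵥ W 0 ⨯₃ W 1 = 0 := by
    have := congrArg (W 0 ⬝ᵥ ·) h₂
    rw [triple_product_permutation, triple_product_permutation]
    simpa [dotProduct_add, triple_product_permutation (W 0)] using this
  have := congrArg (· ⨯₃ W 0) (triple_product_smul (W 0) (W 1) (W 2) (θ 1 2))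
  rw [← det_eq_dotProduct_cross, hr₁, hr₂] at this
  simpa [hW] using this

theorem row_dot_sum_cross_eq_zero
    (hcurv : W 0 ⬝ᵥ ∑ p, θ 1 p ⨯₃ θ p 2 = θ 1 2 ⬝ᵥ ∑ p, θ 0 p ⨯₃ W p) :
    W 0 ⬝ᵥ ∑ p, θ 0 p ⨯₃ W p = 0 := by
  have hr := cross_row_eq_zero_of_sum_cross_eq_zero hθ hW h₁ h₂
  have hdiag : ∀ i, θ i i = 0 := fun i => self_eq_neg.mp (hθ i i)
  simp only [Fin.sum_univ_three, hθ 0 1, hθ 0 2, hθ 1 2, hdiag, map_neg, map_zero,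
    LinearMap.zero_apply, LinearMap.neg_apply, zero_add, add_zero, dotProduct_neg] at h₁ h₂ hcurv ⊢
  set s := θ 0 1
  set q := θ 0 2
  set r := θ 1 2
  rw [det_eq_dotProduct_cross] at hW
  set D := W 0 ⬝ᵥ W 1 ⨯₃ W 2
  set F := r ⬝ᵥ W 1 ⨯₃ W 2
  have hrD : D • r = F • W 0 := by
    have := congrArg (· ⨯₃ (W 1 ⨯₃ W 2)) hr
    simp only [cross_cross_eq_smul_sub_smul, map_zero, LinearMap.zero_apply] at this
    exact (sub_eq_zero.mp this).symm
  have hsD : D • s = (s ⬝ᵥ W 1 ⨯₃ W 2) • W 0 - F • W 2 := by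
    have := congrArg (· ⨯₃ (W 1 ⨯₃ W 2)) h₁
    simp only [cross_cross_eq_smul_sub_smul, map_add, map_neg, LinearMap.add_apply,
      LinearMap.neg_apply, dot_cross_self, zero_smul, sub_zero, map_zero,
      LinearMap.zero_apply] at this
    linear_combination (norm := module) this
  have hqD : D • q = (q ⬝ᵥ W 1 ⨯₃ W 2) • W 0 + F • W 1 := by
    have := congrArg (· ⨯₃ (W 1 ⨯₃ W 2)) h₂
    simp only [cross_cross_eq_smul_sub_smul, map_add, map_neg, LinearMap.add_apply,
      LinearMap.neg_apply, dot_self_cross, zero_smul, sub_zero, map_zero,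
      LinearMap.zero_apply] at this
    linear_combination (norm := module) this
  have hΩ : D * (W 0 ⬝ᵥ (s ⨯₃ W 1 + q ⨯₃ W 2)) = D * (2 * F) := by
    calc D * (W 0 ⬝ᵥ (s ⨯₃ W 1 + q ⨯₃ W 2))
        = W 0 ⬝ᵥ ((D • s) ⨯₃ W 1 + (D • q) ⨯₃ W 2) := by simp [dotProduct_add, mul_add]
      _ = D * (2 * F) := by
        rw [hsD, hqD]
        simp only [D, dotProduct, cross_apply, Fin.sum_univ_three, Fin.isValue, cons_val, map_add,
          map_sub, map_smul, LinearMap.add_apply, LinearMap.sub_apply, LinearMap.smul_apply,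
          Pi.add_apply, Pi.sub_apply, Pi.smul_apply, smul_eq_mul]
        ring
  have hsq : D * (D * (W 0 ⬝ᵥ s ⨯₃ q)) = D * F ^ 2 := by
    calc D * (D * (W 0 ⬝ᵥ s ⨯₃ q)) = W 0 ⬝ᵥ (D • s) ⨯₃ (D • q) := by simp
      _ = D * F ^ 2 := by
        rw [hsD, hqD]
        simp only [D, dotProduct, cross_apply, Fin.sum_univ_three, Fin.isValue, cons_val, map_add,
          map_sub, map_smul, LinearMap.sub_apply, LinearMap.smul_apply, Pi.add_apply,
          Pi.sub_apply, Pi.smul_apply, smul_eq_mul]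
        ring
  have hrΩ : D * (r ⬝ᵥ (s ⨯₃ W 1 + q ⨯₃ W 2)) = F * (W 0 ⬝ᵥ (s ⨯₃ W 1 + q ⨯₃ W 2)) := by
    rw [← smul_eq_mul, ← smul_dotProduct, hrD, smul_dotProduct, smul_eq_mul]
  -- with `f = F / D`, `hcurv` says `f² = -2 f²`
  have hF : F = 0 := by
    have : D * F ^ 2 * 3 = 0 := by
      linear_combination -(D * D * hcurv + hsq + D * hrΩ + F * hΩ)
    simpa [hW] using this
  simpa [hF, hW] using hΩ

end StructureEquations

noncomputable section Curl

variable {u : Fin 3 → ℝ}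

def curl (f : (Fin 3 → ℝ) → Fin 3 → ℝ) (u : Fin 3 → ℝ) : Fin 3 → ℝ :=
  ![pd 1 (f · 2) u - pd 2 (f · 1) u, pd 2 (f · 0) u - pd 0 (f · 2) u,
    pd 0 (f · 1) u - pd 1 (f · 0) u]

theorem curl_eq_zero_of_pd_comm {f : (Fin 3 → ℝ) → Fin 3 → ℝ}
    (h : ∀ j k, pd j (fun v => f v k) u = pd k (fun v => f v j) u) : curl f u = 0 := by
  ext c
  fin_cases c <;> simp [curl, h 1 2, h 2 0, h 0 1]

theorem dotProduct_curl_eq_of_cross_eq_zero {f g : (Fin 3 → ℝ) → Fin 3 → ℝ}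
    (hf : ∀ i, DifferentiableAt ℝ (fun v => f v i) u)
    (hg : ∀ i, DifferentiableAt ℝ (fun v => g v i) u) (h : ∀ᶠ v in 𝓝 u, f v ⨯₃ g v = 0) :
    g u ⬝ᵥ curl f u = f u ⬝ᵥ curl g u := by
  -- `div (f ⨯₃ g) = g ⬝ᵥ curl f - f ⬝ᵥ curl g`, and `f ⨯₃ g` vanishes near `u`
  have hdiv : ∀ c, pd c (fun v => (f v ⨯₃ g v) c) u = 0 := fun c =>
    (pd_congr_of_eventuallyEq (h.mono fun v hv => by simp only [hv, Pi.zero_apply]) c).trans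
      (pd_const 0 c u)
  have hprod : ∀ c j k, pd c (fun v => f v j * g v k - f v k * g v j) u
      = pd c (f · j) u * g u k + f u j * pd c (g · k) u
        - (pd c (f · k) u * g u j + f u k * pd c (g · j) u) := fun c j k => by
    rw [pd_sub ((hf j).fun_mul (hg k)) ((hf k).fun_mul (hg j)), pd_mul (hf j) (hg k),
      pd_mul (hf k) (hg j)]
  have h₀ := hdiv 0
  have h₁ := hdiv 1
  have h₂ := hdiv 2
  simp only [cross_apply, Fin.isValue, cons_val] at h₀ h₁ h₂
  rw [hprod] at h₀ h₁ h₂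
  simp only [curl, dotProduct, Fin.sum_univ_three, Fin.isValue, cons_val]
  linear_combination h₀ + h₁ + h₂

theorem curl_connForm {a : (Fin 3 → ℝ) → Matrix (Fin 3) (Fin 3) ℝ}
    (ha : ∀ i j, ContDiffAt ℝ 2 (fun v => a v i j) u) (hO : ∀ᶠ v in 𝓝 u, (a v)ᵀ * a v = 1)
    (i j : Fin 3) :
    curl (connForm a i j) u = -∑ p, connForm a i p u ⨯₃ connForm a p j u := by
  have hθ : ∀ l l', pd l (fun v => connMat a l' v i j) u
      = -(connMat a l u * connMat a l' u) i j + ((a u)ᵀ * pdMat l (pdMat l' a) u) i j :=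
    fun l l' => congrFun (congrFun (pdMat_connMat ha hO l l') i) j
  ext c
  fin_cases c <;>
  · simp only [curl, connForm, hθ, pdMat_pdMat_comm ha 1 2, pdMat_pdMat_comm ha 2 0,
      pdMat_pdMat_comm ha 0 1, mul_apply, transpose_apply, Fin.sum_univ_three, cross_apply,
      Pi.neg_apply, Fin.isValue, Fin.zero_eta, Fin.mk_one, Fin.reduceFinMk, cons_val, add_cons,
      head_cons, tail_cons, empty_add_empty]
    ring

end Curl

noncomputable section Frame

variable {u : Fin 3 → ℝ} {x : (Fin 3 → ℝ) → Fin 3 → ℝ}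
  {a : (Fin 3 → ℝ) → Matrix (Fin 3) (Fin 3) ℝ}

theorem differentiableAt_jacobian_apply (hx : ContDiffAt ℝ 2 x u) (i j : Fin 3) :
    DifferentiableAt ℝ (fun v => jacobian x v i j) u :=
  differentiableAt_pi.mp ((hx.pd (n := 1) j).differentiableAt one_ne_zero) i

theorem pdMat_jacobian_comm (hx : ContDiffAt ℝ 2 x u) (i j k : Fin 3) :
    pdMat k (jacobian x) u i j = pdMat j (jacobian x) u i k := by
  have hpd : ∀ j, DifferentiableAt ℝ (pd j x) u := fun j =>
    (hx.pd (n := 1) j).differentiableAt one_ne_zero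
  simp only [pdMat, jacobian, of_apply]
  rw [pd_apply (hpd j), pd_apply (hpd k), pd_comm hx]

theorem Wmat_eventuallyEq (hO : ∀ᶠ v in 𝓝 u, (a v)ᵀ * a v = 1) :
    Wmat a x =ᶠ[𝓝 u] fun v => (a v)ᵀ * jacobian x v :=
  hO.mono fun v hv => by rw [Wmat, inv_eq_left_inv hv]

theorem det_Wmat (ha : a u ∈ SO3) : (Wmat a x u).det = (jacobian x u).det := by
  rw [Wmat, det_mul, det_nonsing_inv, ha.2, Ring.inverse_one, one_mul]

variable (hx : ContDiffAt ℝ 2 x u) (hO : ∀ᶠ v in 𝓝 u, (a v)ᵀ * a v = 1)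
  (ha : ∀ i j, DifferentiableAt ℝ (fun v => a v i j) u)
include hx hO ha

theorem differentiableAt_Wmat_apply (i j : Fin 3) :
    DifferentiableAt ℝ (fun v => Wmat a x v i j) u :=
  (differentiableAt_mul_apply (A := fun v => (a v)ᵀ) (fun i k => ha k i)
    (differentiableAt_jacobian_apply hx) i j).congr_of_eventuallyEq
    ((Wmat_eventuallyEq (x := x) hO).mono fun v hv => by simp only [hv])

theorem pdMat_Wmat (k : Fin 3) :
    pdMat k (Wmat a x) u
      = -(connMat a k u * Wmat a x u) + (a u)ᵀ * pdMat k (jacobian x) u := by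
  rw [pdMat_congr_of_eventuallyEq (Wmat_eventuallyEq hO),
    pdMat_transpose_mul hO ha (differentiableAt_jacobian_apply hx),
    (Wmat_eventuallyEq hO).self_of_nhds]

theorem curl_Wmat_row (i : Fin 3) :
    curl (fun v => Wmat a x v i) u = -∑ p, connForm a i p u ⨯₃ Wmat a x u p := by
  have hW : ∀ k j, pd k (fun v => Wmat a x v i j) u
      = -(connMat a k u * Wmat a x u) i j + ((a u)ᵀ * pdMat k (jacobian x) u) i j :=
    fun k j => congrFun (congrFun (pdMat_Wmat hx hO ha k) i) j
  have hS : ∀ j k, ((a u)ᵀ * pdMat k (jacobian x) u) i j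
      = ((a u)ᵀ * pdMat j (jacobian x) u) i k := fun j k => by
    simp only [mul_apply, pdMat_jacobian_comm hx _ j k]
  ext c
  fin_cases c <;>
  · simp only [curl, connForm, hW, hS 2 1, hS 0 2, hS 1 0, mul_apply, Fin.sum_univ_three,
      cross_apply, Pi.neg_apply, Fin.isValue, Fin.zero_eta, Fin.mk_one, Fin.reduceFinMk, cons_val,
      add_cons, head_cons, tail_cons, empty_add_empty]
    ring

end Frame

/-- if `ω = a⁻¹ dx` is a coframing (flat metric) with `dω² = dω³ = 0`,
then `ω¹ ∧ dω¹ = 0` (the general claim proved in Example 4.1 of the paper). -/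
theorem omega1_wedge_domega1_eq_zero
    (U : Set (Fin 3 → ℝ)) (hU : IsOpen U)
    (x : (Fin 3 → ℝ) → (Fin 3 → ℝ)) (a : (Fin 3 → ℝ) → Matrix (Fin 3) (Fin 3) ℝ)
    (hx : ContDiffOn ℝ (⊤ : ℕ∞) x U)
    (hjac : ∀ u ∈ U, IsUnit (jacobian x u).det)
    (ha : ∀ i k : Fin 3, ContDiffOn ℝ (⊤ : ℕ∞) (fun u => a u i k) U)
    (haSO : ∀ u ∈ U, a u ∈ SO3)
    (hclosed : ∀ i : Fin 3, i = 1 ∨ i = 2 → ∀ j k : Fin 3, ∀ u ∈ U,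
      pd j (fun v => Wmat a x v i k) u = pd k (fun v => Wmat a x v i j) u) :
    ∀ u ∈ U,
      Wmat a x u 0 0 *
          (pd 1 (fun v => Wmat a x v 0 2) u - pd 2 (fun v => Wmat a x v 0 1) u)
        + Wmat a x u 0 1 *
          (pd 2 (fun v => Wmat a x v 0 0) u - pd 0 (fun v => Wmat a x v 0 2) u)
        + Wmat a x u 0 2 *
          (pd 0 (fun v => Wmat a x v 0 1) u - pd 1 (fun v => Wmat a x v 0 0) u)
        = 0 := by
  have hO : ∀ v ∈ U, ∀ᶠ w in 𝓝 v, (a w)ᵀ * a w = 1 := fun v hv =>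
    Filter.mem_of_superset (hU.mem_nhds hv) fun w hw => (haSO w hw).1
  have hx₂ : ∀ v ∈ U, ContDiffAt ℝ 2 x v := fun v hv =>
    (hx.contDiffAt (hU.mem_nhds hv)).of_le (WithTop.coe_le_coe.mpr le_top)
  have ha₂ : ∀ v ∈ U, ∀ i j, ContDiffAt ℝ 2 (fun w => a w i j) v := fun v hv i j =>
    ((ha i j).contDiffAt (hU.mem_nhds hv)).of_le (WithTop.coe_le_coe.mpr le_top)
  have ha₁ : ∀ v ∈ U, ∀ i j, DifferentiableAt ℝ (fun w => a w i j) v := fun v hv i j =>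
    (ha₂ v hv i j).differentiableAt two_ne_zero
  have hstruct : ∀ v ∈ U, ∀ i,
      curl (fun w => Wmat a x w i) v = -∑ p, connForm a i p v ⨯₃ Wmat a x v p := fun v hv =>
    curl_Wmat_row (hx₂ v hv) (hO v hv) (ha₁ v hv)
  have hdω : ∀ v ∈ U, ∀ i, i = 1 ∨ i = 2 → ∑ p, connForm a i p v ⨯₃ Wmat a x v p = 0 :=
    fun v hv i hi => by
      rw [← neg_eq_zero, ← hstruct v hv i]
      exact curl_eq_zero_of_pd_comm fun j k => hclosed i hi j k v hv
  have hdet : ∀ v ∈ U, (Wmat a x v).det ≠ 0 := fun v hv => by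
    rw [det_Wmat (haSO v hv)]; exact (hjac v hv).ne_zero
  have hr : ∀ v ∈ U, connForm a 1 2 v ⨯₃ Wmat a x v 0 = 0 := fun v hv =>
    cross_row_eq_zero_of_sum_cross_eq_zero (θ := fun i j => connForm a i j v)
      (connForm_swap (hO v hv) (ha₁ v hv)) (hdet v hv) (hdω v hv 1 (.inl rfl))
      (hdω v hv 2 (.inr rfl))
  intro u hu
  have hdiv := dotProduct_curl_eq_of_cross_eq_zero (f := connForm a 1 2)
    (fun l => differentiableAt_connMat_apply (ha₂ u hu) l 1 2)
    (differentiableAt_Wmat_apply (hx₂ u hu) (hO u hu) (ha₁ u hu) 0)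
    (Filter.mem_of_superset (hU.mem_nhds hu) hr)
  rw [curl_connForm (ha₂ u hu) (hO u hu), hstruct u hu, dotProduct_neg, dotProduct_neg,
    neg_inj] at hdiv
  have hω : Wmat a x u 0 ⬝ᵥ curl (fun v => Wmat a x v 0) u = 0 := by
    rw [hstruct u hu, dotProduct_neg, neg_eq_zero]
    exact row_dot_sum_cross_eq_zero (θ := fun i j => connForm a i j u)
      (connForm_swap (hO u hu) (ha₁ u hu)) (hdet u hu) (hdω u hu 1 (.inl rfl))
      (hdω u hu 2 (.inr rfl)) hdiv
  simpa [curl, dotProduct, Fin.sum_univ_three] using hω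
end

section
/- Let V ⊆ ℝ³ be an open neighborhood of the origin and let b = (b₁, b₂, b₃) : V → ℝ³ be a continuous map satisfying u¹·b₁(u) + u²·b₂(u) − 2u³·b₃(u) = 0 for all u = (u¹,u²,u³) ∈ V. Then b(0) = 0. (Equivalently: the 2-form Υ = u¹ du²∧du³ + u² du³∧du¹ − 2u³ du¹∧du² admits no factorization Υ ∧ β = 0 with a 1-form β that is nonvanishing at the origin.) -/
open Matrix

open Filter Topology

/-- On the `i`-th axis the relation reads `wᵢ t bᵢ(t eᵢ) = 0`, so `bᵢ` vanishes on the punctured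
axis and hence, by continuity, at `0`. -/
theorem eq_zero_of_weighted_sum_eq_zero {𝕜 ι : Type*} [NontriviallyNormedField 𝕜] [Fintype ι]
    [DecidableEq ι] {V : Set (ι → 𝕜)} (hV : V ∈ 𝓝 0) {b : (ι → 𝕜) → ι → 𝕜}
    (hb : ContinuousAt b 0) {w : ι → 𝕜} (hw : ∀ i, w i ≠ 0)
    (heq : ∀ u ∈ V, ∑ i, w i * u i * b u i = 0) : b 0 = 0 := by
  funext i
  have hline : ContinuousAt (fun t : 𝕜 => Pi.single i t : 𝕜 → ι → 𝕜) 0 :=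
    (continuous_single i).continuousAt
  have hg : ContinuousAt (fun t : 𝕜 => b (Pi.single i t) i) 0 :=
    (continuous_apply i).continuousAt.comp (hb.comp_of_eq hline (Pi.single_zero i))
  have haxis : (fun t : 𝕜 => b (Pi.single i t) i) =ᶠ[𝓝[≠] 0] fun _ => 0 := by
    filter_upwards [nhdsWithin_le_nhds (hline.preimage_mem_nhds (by simpa using hV)),
      self_mem_nhdsWithin] with t htV ht
    have hsum := heq _ htV
    simp only [Pi.single_apply, mul_ite, ite_mul, mul_zero, zero_mul,
      Finset.sum_ite_eq', Finset.mem_univ, if_true] at hsum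
    exact (mul_eq_zero.1 hsum).resolve_left (mul_ne_zero (hw i) ht)
  simpa using ((hg.eventuallyEq_nhds_iff_eventuallyEq_nhdsNE continuousAt_const).1 haxis).eq_of_nhds

/-- any continuous `b` with `u¹b₁ + u²b₂ - 2u³b₃ = 0` near the origin
vanishes at the origin (the factorization obstruction of Example 4.1 of the paper). -/
theorem upsilon_no_nonvanishing_factor
    (V : Set (Fin 3 → ℝ)) (hV : IsOpen V) (h0 : (0 : Fin 3 → ℝ) ∈ V)
    (b : (Fin 3 → ℝ) → (Fin 3 → ℝ)) (hb : ContinuousOn b V)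
    (heq : ∀ u ∈ V, u 0 * b u 0 + u 1 * b u 1 - 2 * u 2 * b u 2 = 0) :
    b 0 = 0 := by
  refine eq_zero_of_weighted_sum_eq_zero (hV.mem_nhds h0) (hb.continuousAt (hV.mem_nhds h0))
    (w := ![1, 1, -2]) (by simp [Fin.forall_fin_succ]) fun u hu => ?_
  simpa [Fin.sum_univ_three, sub_eq_add_neg] using heq u hu
end

section
/- Let J ⊆ ℝ be an open interval and g₂, g₃ : J → ℝ smooth functions. Let U ⊆ J × ℝ² be a connected, simply connected open set on which f(u) := 1 + g₂(u¹)u² + g₃(u¹)u³ is nonvanishing. Then the coframing ω = (f du¹, du², du³) has flat associated metric: there exist a smooth map x : U → ℝ³ with Dx(u) invertible for all u ∈ U and a smooth map a : U → SO(3) such that a(u)⁻¹ · Dx(u) = diag(f(u), 1, 1) for all u ∈ U. -/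
open Matrix

/-!
The rotation `a(u) = Y(u¹)` comes from the linear ODE `Y' = Y S` on `J`, where `S` is the skew
matrix with first row `(0, g₂, g₃)` and first column `(0, -g₂, -g₃)`: the columns `e₀, e₁, e₂`
of `Y` then form a rotation-minimising (Bishop) frame, `e₁' = g₂ e₀` and `e₂' = g₃ e₀`, and `Y`
stays in `SO(3)` because `S` is skew. With `c' = e₀`, the map
`x(u) = c(u¹) + u² e₁(u¹) + u³ e₂(u¹)` has `∂₁x = (1 + g₂ u² + g₃ u³) e₀`, `∂₂x = e₁`,
`∂₃x = e₂`, i.e. `Dx = a · diag(f, 1, 1)`.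

The ODE is solved on all of `J` because it is linear: Picard–Lindelöf gives solutions for every
initial value on intervals of a fixed length, these are glued along each compact subinterval,
and uniqueness patches the resulting solutions together over `J`.
-/

open Set
open scoped NNReal Topology ContDiff

theorem IsCompact.exists_nnnorm_bound_of_continuousOn {X F : Type*} [TopologicalSpace X]
    [NormedAddCommGroup F] {s : Set X} (hs : IsCompact s) {f : X → F} (hf : ContinuousOn f s) :
    ∃ C : ℝ≥0, ∀ x ∈ s, ‖f x‖₊ ≤ C := by
  obtain ⟨C, hC⟩ := hs.exists_bound_of_continuousOn hf
  exact ⟨C.toNNReal, fun x hx => by rw [← norm_toNNReal]; exact Real.toNNReal_le_toNNReal (hC x hx)⟩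

section LinearODE

variable {E : Type*} [NormedAddCommGroup E] [NormedSpace ℝ E]

theorem IsIntegralCurveOn.piecewise_Icc {v : ℝ → E → E} {α β : ℝ → E} {a m b : ℝ}
    (ham : a ≤ m) (hmb : m ≤ b) (hα : IsIntegralCurveOn α v (Icc a m))
    (hβ : IsIntegralCurveOn β v (Icc m b)) (hm : α m = β m) :
    IsIntegralCurveOn (fun t => if t ≤ m then α t else β t) v (Icc a b) := by
  set γ := fun t => if t ≤ m then α t else β t
  have hγα : EqOn γ α (Icc a m) := fun t ht => if_pos ht.2
  have hγβ : EqOn γ β (Icc m b) := fun t ht => by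
    rcases ht.1.eq_or_lt with rfl | h
    · exact (if_pos le_rfl).trans hm
    · exact if_neg h.not_ge
  intro t ht
  rw [← Icc_union_Icc_eq_Icc ham hmb]
  refine HasDerivWithinAt.union ?_ ?_
  · by_cases hta : t ∈ Icc a m
    · rw [hγα hta]; exact (hα t hta).congr hγα (hγα hta)
    · exact hasDerivWithinAt_iff_hasFDerivWithinAt.2
        (.of_notMem_closure (by rwa [closure_Icc]))
  · by_cases htb : t ∈ Icc m b
    · rw [hγβ htb]; exact (hβ t htb).congr hγβ (hγβ htb)
    · exact hasDerivWithinAt_iff_hasFDerivWithinAt.2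
        (.of_notMem_closure (by rwa [closure_Icc]))

variable {A : ℝ → E →L[ℝ] E} {a b t₁ : ℝ}

theorem IsIntegralCurveOn.eqOn_of_linear (hA : ContinuousOn A (Icc a b)) {α β : ℝ → E}
    (hα : IsIntegralCurveOn α (fun t x => A t x) (Icc a b))
    (hβ : IsIntegralCurveOn β (fun t x => A t x) (Icc a b))
    (ht₁ : t₁ ∈ Ioo a b) (h : α t₁ = β t₁) : EqOn α β (Icc a b) := by
  obtain ⟨C, hC⟩ := isCompact_Icc.exists_nnnorm_bound_of_continuousOn hA
  have hderiv : ∀ {γ : ℝ → E}, IsIntegralCurveOn γ (fun t x => A t x) (Icc a b) →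
      ∀ t ∈ Ioo a b, HasDerivAt γ (A t (γ t)) t := fun hγ t ht =>
    (hγ t (Ioo_subset_Icc_self ht)).hasDerivAt (Icc_mem_nhds ht.1 ht.2)
  exact ODE_solution_unique_of_mem_Icc (s := fun _ => univ)
    (fun t ht => ((A t).lipschitz.weaken (hC t (Ioo_subset_Icc_self ht))).lipschitzOnWith) ht₁
    hα.continuousOn (hderiv hα) (fun _ _ => trivial) hβ.continuousOn (hderiv hβ)
    (fun _ _ => trivial) h

theorem contDiffOn_of_hasDerivAt_linear {J : Set ℝ} (hJ : IsOpen J) (hA : ContDiffOn ℝ ∞ A J)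
    {α : ℝ → E} (hα : ∀ t ∈ J, HasDerivAt α (A t (α t)) t) : ContDiffOn ℝ ∞ α J := by
  refine contDiffOn_infty.2 fun n => ?_
  induction n with
  | zero => exact contDiffOn_zero.2 fun t ht => (hα t ht).continuousAt.continuousWithinAt
  | succ n ih =>
    rw [Nat.cast_succ, contDiffOn_succ_iff_deriv_of_isOpen hJ]
    refine ⟨fun t ht => (hα t ht).differentiableAt.differentiableWithinAt, fun h => ?_,
      ((hA.of_le (by exact_mod_cast le_top)).clm_apply ih).congr fun t ht => (hα t ht).deriv⟩
    simp at h

variable [CompleteSpace E]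

theorem exists_isIntegralCurveOn_linear_Icc_of_mul_le (hA : ContinuousOn A (Icc a b))
    {C : ℝ≥0} (hC : ∀ t ∈ Icc a b, ‖A t‖₊ ≤ C) (hab : 2 * C * (b - a) ≤ 1)
    (ht₁ : t₁ ∈ Icc a b) (y : E) :
    ∃ α : ℝ → E, α t₁ = y ∧ IsIntegralCurveOn α (fun t x => A t x) (Icc a b) := by
  -- on the ball of radius `2‖y‖` about `0` the admissible time is independent of `y`
  have hPL : IsPicardLindelof (fun t x => A t x) (⟨t₁, ht₁⟩ : Icc a b) 0 (2 * ‖y‖₊) ‖y‖₊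
      (2 * ‖y‖₊ * C) C := by
    refine ⟨fun t ht => ((A t).lipschitz.weaken (hC t ht)).lipschitzOnWith,
      fun x _ => hA.clm_apply continuousOn_const, fun t ht x hx => ?_, ?_⟩
    · have hx : ‖x‖ ≤ 2 * ‖y‖ := by simpa using hx
      calc ‖A t x‖ ≤ ‖A t‖ * ‖x‖ := (A t).le_opNorm x
        _ ≤ C * (2 * ‖y‖) := mul_le_mul (hC t ht) hx (norm_nonneg _) C.2
        _ = _ := by push_cast; ring
    · have hmax : max (b - t₁) (t₁ - a) ≤ b - a :=
        max_le (by linarith [ht₁.1]) (by linarith [ht₁.2])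
      push_cast
      nlinarith [norm_nonneg y,
        mul_le_mul_of_nonneg_left hmax (by positivity : (0 : ℝ) ≤ 2 * ‖y‖ * C)]
  exact hPL.exists_eq_forall_mem_Icc_hasDerivWithinAt (by simp)

theorem exists_isIntegralCurveOn_linear_Icc (hA : ContinuousOn A (Icc a b))
    (ht₁ : t₁ ∈ Icc a b) (y : E) :
    ∃ α : ℝ → E, α t₁ = y ∧ IsIntegralCurveOn α (fun t x => A t x) (Icc a b) := by
  obtain ⟨C, hC⟩ := isCompact_Icc.exists_nnnorm_bound_of_continuousOn hA
  set δ : ℝ := (2 * C + 1)⁻¹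
  have hδ : 0 < δ := by positivity
  have hCδ : 2 * C * δ ≤ 1 := by
    rw [← div_eq_mul_inv, div_le_one (by positivity)]; linarith
  have short : ∀ a' b', Icc a' b' ⊆ Icc a b → b' - a' ≤ δ → ∀ t₁ ∈ Icc a' b', ∀ y : E,
      ∃ α : ℝ → E, α t₁ = y ∧ IsIntegralCurveOn α (fun t x => A t x) (Icc a' b') :=
    fun a' b' hsub hlen t₁ ht₁ y => exists_isIntegralCurveOn_linear_Icc_of_mul_le (hA.mono hsub)
      (fun t ht => hC t (hsub ht)) (by nlinarith [C.2]) ht₁ y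
  -- an interval of length `≤ (n + 1) δ` is cut at distance `δ` from its right end
  have long : ∀ n : ℕ, ∀ a' b', Icc a' b' ⊆ Icc a b → b' - a' ≤ n * δ → ∀ t₁ ∈ Icc a' b',
      ∀ y : E, ∃ α : ℝ → E, α t₁ = y ∧ IsIntegralCurveOn α (fun t x => A t x) (Icc a' b') := by
    intro n
    induction n with
    | zero => exact fun a' b' hsub hlen => short a' b' hsub (by simp at hlen; linarith)
    | succ n ih =>
      intro a' b' hsub hlen t₁ ht₁ y
      by_cases hshort : b' - a' ≤ δ
      · exact short a' b' hsub hshort t₁ ht₁ y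
      set m := b' - δ
      have ham : a' ≤ m := by linarith
      have hmb : m ≤ b' := by linarith
      have hsubl : Icc a' m ⊆ Icc a b := (Icc_subset_Icc_right hmb).trans hsub
      have hsubr : Icc m b' ⊆ Icc a b := (Icc_subset_Icc_left ham).trans hsub
      have hlenl : m - a' ≤ n * δ := by push_cast at hlen; linarith
      have hlenr : b' - m ≤ δ := by linarith
      rcases le_or_gt t₁ m with htm | hmt
      · obtain ⟨α, hα₁, hα⟩ := ih a' m hsubl hlenl t₁ ⟨ht₁.1, htm⟩ y
        obtain ⟨β, hβm, hβ⟩ := short m b' hsubr hlenr m ⟨le_rfl, hmb⟩ (α m)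
        exact ⟨_, by simp [htm, hα₁], hα.piecewise_Icc ham hmb hβ hβm.symm⟩
      · obtain ⟨β, hβ₁, hβ⟩ := short m b' hsubr hlenr t₁ ⟨hmt.le, ht₁.2⟩ y
        obtain ⟨α, hαm, hα⟩ := ih a' m hsubl hlenl m ⟨ham, le_rfl⟩ (β m)
        exact ⟨_, by simp [hmt.not_ge, hβ₁], hα.piecewise_Icc ham hmb hβ hαm⟩
  obtain ⟨n, hn⟩ := exists_nat_ge ((b - a) / δ)
  exact long n a b subset_rfl (by rwa [div_le_iff₀ hδ] at hn) t₁ ht₁ y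

theorem exists_hasDerivAt_linear {J : Set ℝ} (hJ : IsOpen J) (hJc : J.OrdConnected)
    (hA : ContinuousOn A J) {t₀ : ℝ} (ht₀ : t₀ ∈ J) (y₀ : E) :
    ∃ α : ℝ → E, α t₀ = y₀ ∧ ∀ t ∈ J, HasDerivAt α (A t (α t)) t := by
  have hwiden : ∀ p ∈ J, ∃ ε > 0, p - ε ∈ J ∧ p + ε ∈ J := fun p hp => by
    obtain ⟨ε, hε, hball⟩ := Metric.isOpen_iff.1 hJ p hp
    exact ⟨ε / 2, by positivity, hball (by simp [abs_of_pos hε]; linarith),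
      hball (by simp [abs_of_pos hε]; linarith)⟩
  have hwindow : ∀ t ∈ J, ∃ l r, Icc l r ⊆ J ∧ t ∈ Ioo l r ∧ t₀ ∈ Ioo l r := fun t ht => by
    obtain ⟨ε₁, hε₁, hl, -⟩ := hwiden (min t t₀) (by rcases min_choice t t₀ with h | h <;> rwa [h])
    obtain ⟨ε₂, hε₂, -, hr⟩ := hwiden (max t t₀) (by rcases max_choice t t₀ with h | h <;> rwa [h])
    exact ⟨_, _, hJc.out hl hr, ⟨by linarith [min_le_left t t₀], by linarith [le_max_left t t₀]⟩,
      ⟨by linarith [min_le_right t t₀], by linarith [le_max_right t t₀]⟩⟩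
  choose l r hlrJ hlrt hlrt₀ using hwindow
  choose α hα₀ hα using fun t (ht : t ∈ J) =>
    exists_isIntegralCurveOn_linear_Icc (hA.mono (hlrJ t ht)) (Ioo_subset_Icc_self (hlrt₀ t ht)) y₀
  classical
  set γ : ℝ → E := fun t => if ht : t ∈ J then α t ht t else y₀
  have hγα : ∀ t (ht : t ∈ J), ∀ s ∈ Ioo (l t ht) (r t ht), γ s = α t ht s := by
    intro t ht s hs
    have hsJ : s ∈ J := hlrJ t ht (Ioo_subset_Icc_self hs)
    set I := Icc (max (l s hsJ) (l t ht)) (min (r s hsJ) (r t ht))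
    have hIs : I ⊆ Icc (l s hsJ) (r s hsJ) := Icc_subset_Icc (le_max_left _ _) (min_le_left _ _)
    have hIt : I ⊆ Icc (l t ht) (r t ht) := Icc_subset_Icc (le_max_right _ _) (min_le_right _ _)
    have heq : EqOn (α s hsJ) (α t ht) I :=
      ((hα s hsJ).mono hIs).eqOn_of_linear (hA.mono (hIs.trans (hlrJ s hsJ)))
        ((hα t ht).mono hIt)
        ⟨max_lt (hlrt₀ s hsJ).1 (hlrt₀ t ht).1, lt_min (hlrt₀ s hsJ).2 (hlrt₀ t ht).2⟩
        ((hα₀ s hsJ).trans (hα₀ t ht).symm)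
    simpa [γ, hsJ] using heq ⟨max_le (hlrt s hsJ).1.le hs.1.le, le_min (hlrt s hsJ).2.le hs.2.le⟩
  refine ⟨γ, by simp [γ, ht₀, hα₀], fun t ht => ?_⟩
  have hnhds : Ioo (l t ht) (r t ht) ∈ 𝓝 t := Ioo_mem_nhds (hlrt t ht).1 (hlrt t ht).2
  have hγ : γ =ᶠ[𝓝 t] α t ht := Filter.eventually_of_mem hnhds (hγα t ht)
  rw [hγ.eq_of_nhds]
  exact ((hα t ht t (Ioo_subset_Icc_self (hlrt t ht))).hasDerivAt
    (Filter.mem_of_superset hnhds Ioo_subset_Icc_self)).congr_of_eventuallyEq hγ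

end LinearODE

theorem exists_contDiffOn_primitive {F : Type*} [NormedAddCommGroup F] [NormedSpace ℝ F]
    [CompleteSpace F] {J : Set ℝ} (hJ : IsOpen J) (hJc : J.OrdConnected) {f : ℝ → F}
    (hf : ContDiffOn ℝ ∞ f J) {t₀ : ℝ} (ht₀ : t₀ ∈ J) :
    ∃ g : ℝ → F, ContDiffOn ℝ ∞ g J ∧ ∀ t ∈ J, HasDerivAt g (f t) t := by
  have hg : ∀ t ∈ J, HasDerivAt (fun t => ∫ s in t₀..t, f s) (f t) t := fun t ht =>
    intervalIntegral.integral_hasDerivAt_right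
      (hf.continuousOn.mono (hJc.uIcc_subset ht₀ ht)).intervalIntegrable
      (hf.continuousOn.stronglyMeasurableAtFilter hJ t ht)
      (hf.continuousOn.continuousAt (hJ.mem_nhds ht))
  exact ⟨_, (contDiffOn_infty_iff_deriv_of_isOpen hJ).2 ⟨fun t ht =>
    (hg t ht).differentiableAt.differentiableWithinAt, hf.congr fun t ht => (hg t ht).deriv⟩, hg⟩

section Frame

-- any norm would do; this one makes square matrices a normed algebra
attribute [local instance] Matrix.linftyOpNormedAddCommGroup Matrix.linftyOpNormedSpace
  Matrix.linftyOpNormedRing Matrix.linftyOpNormedAlgebra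

variable {F : Type*} [NormedAddCommGroup F] [NormedSpace ℝ F] {J : Set ℝ} {t₀ : ℝ}

section Rectangular

variable {m p : Type*} [Fintype m] [Fintype p] {Y : ℝ → Matrix m p ℝ} {Y' : Matrix m p ℝ}

theorem HasDerivAt.matrix_linearMap (L : Matrix m p ℝ →ₗ[ℝ] F) {t : ℝ}
    (h : HasDerivAt Y Y' t) : HasDerivAt (fun t => L (Y t)) (L Y') t :=
  (LinearMap.toContinuousLinearMap L).hasFDerivAt.comp_hasDerivAt t h

theorem ContDiffOn.matrix_linearMap (L : Matrix m p ℝ →ₗ[ℝ] F) (h : ContDiffOn ℝ ∞ Y J) :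
    ContDiffOn ℝ ∞ (fun t => L (Y t)) J :=
  (LinearMap.toContinuousLinearMap L).contDiff.comp_contDiffOn h

end Rectangular

variable {n : Type*} [Fintype n] [DecidableEq n] {Y : ℝ → Matrix n n ℝ}

theorem mul_transpose_eq_one_of_hasDerivAt {S : ℝ → Matrix n n ℝ} (hJ : IsOpen J)
    (hJc : IsPreconnected J) (hS : ∀ t ∈ J, (S t)ᵀ = -S t)
    (hY : ∀ t ∈ J, HasDerivAt Y (Y t * S t) t) (ht₀ : t₀ ∈ J) (h₀ : Y t₀ * (Y t₀)ᵀ = 1) :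
    ∀ t ∈ J, Y t * (Y t)ᵀ = 1 := by
  have hd : ∀ t ∈ J, HasDerivAt (fun t => Y t * (Y t)ᵀ) 0 t := fun t ht => by
    refine ((hY t ht).mul ((hY t ht).matrix_linearMap
      (transposeLinearEquiv n n ℝ ℝ).toLinearMap)).congr_deriv ?_
    show Y t * S t * (Y t)ᵀ + Y t * (Y t * S t)ᵀ = 0
    rw [transpose_mul, hS t ht]
    noncomm_ring
  intro t ht
  rw [← h₀]
  exact hJ.is_const_of_deriv_eq_zero hJc
    (fun t ht => (hd t ht).differentiableAt.differentiableWithinAt)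
    (fun t ht => (hd t ht).deriv) ht ht₀

theorem det_eq_one_of_mul_transpose_eq_one (hJ : IsPreconnected J) (hY : ContinuousOn Y J)
    (horth : ∀ t ∈ J, Y t * (Y t)ᵀ = 1) (ht₀ : t₀ ∈ J) (h₀ : (Y t₀).det = 1) :
    ∀ t ∈ J, (Y t).det = 1 := by
  have hsq : ∀ t ∈ J, (Y t).det * (Y t).det = 1 := fun t ht => by
    simpa [det_mul, det_transpose] using congrArg det (horth t ht)
  intro t ht
  by_contra hne
  have hneg : (Y t).det = -1 := (mul_self_eq_one_iff.1 (hsq t ht)).resolve_left hne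
  obtain ⟨s, hs, hs0⟩ := hJ.intermediate_value ht ht₀
    (continuous_id.matrix_det.comp_continuousOn hY) (show (0 : ℝ) ∈ Icc _ _ by simp [hneg, h₀])
  simpa [show (Y s).det = 0 from hs0] using hsq s hs

theorem exists_rotation_frame {S : ℝ → Matrix n n ℝ} (hJ : IsOpen J) (hJc : J.OrdConnected)
    (hS : ContDiffOn ℝ ∞ S J) (hskew : ∀ t ∈ J, (S t)ᵀ = -S t) (ht₀ : t₀ ∈ J) :
    ∃ Y : ℝ → Matrix n n ℝ, ContDiffOn ℝ ∞ Y J ∧ (∀ t ∈ J, HasDerivAt Y (Y t * S t) t) ∧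
      ∀ t ∈ J, (Y t)ᵀ * Y t = 1 ∧ (Y t).det = 1 := by
  set A := fun t => (ContinuousLinearMap.mul ℝ (Matrix n n ℝ)).flip (S t)
  have hA : ContDiffOn ℝ ∞ A J :=
    (ContinuousLinearMap.mul ℝ (Matrix n n ℝ)).flip.contDiff.comp_contDiffOn hS
  obtain ⟨Y, hY₀, hY⟩ := exists_hasDerivAt_linear hJ hJc hA.continuousOn ht₀ 1
  have horth := mul_transpose_eq_one_of_hasDerivAt hJ hJc.isPreconnected hskew hY ht₀
    (by simp [hY₀])
  refine ⟨Y, contDiffOn_of_hasDerivAt_linear hJ hA hY, hY, fun t ht =>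
    ⟨mul_eq_one_comm.1 (horth t ht), ?_⟩⟩
  exact det_eq_one_of_mul_transpose_eq_one hJc.isPreconnected
    (fun t ht => (hY t ht).continuousAt.continuousWithinAt) horth ht₀ (by simp [hY₀]) t ht

def bishopMatrix (g₂ g₃ : ℝ → ℝ) (t : ℝ) : Matrix (Fin 3) (Fin 3) ℝ :=
  !![0, g₂ t, g₃ t; -g₂ t, 0, 0; -g₃ t, 0, 0]

theorem bishopMatrix_eq_smul_add_smul (g₂ g₃ : ℝ → ℝ) (t : ℝ) : bishopMatrix g₂ g₃ t =
    g₂ t • !![0, 1, 0; -1, 0, 0; 0, 0, 0] + g₃ t • !![0, 0, 1; 0, 0, 0; -1, 0, 0] := by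
  ext i j; fin_cases i <;> fin_cases j <;> simp [bishopMatrix]

theorem bishopMatrix_transpose (g₂ g₃ : ℝ → ℝ) (t : ℝ) :
    (bishopMatrix g₂ g₃ t)ᵀ = -bishopMatrix g₂ g₃ t := by
  ext i j; fin_cases i <;> fin_cases j <;> simp [bishopMatrix]

def colLinearMap (k : Fin 3) : Matrix (Fin 3) (Fin 3) ℝ →ₗ[ℝ] Fin 3 → ℝ :=
  LinearMap.pi fun i => entryLinearMap ℝ ℝ i k

theorem exists_bishop_frame {g₂ g₃ : ℝ → ℝ} (hJ : IsOpen J) (hJc : J.OrdConnected)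
    (hg₂ : ContDiffOn ℝ ∞ g₂ J) (hg₃ : ContDiffOn ℝ ∞ g₃ J) (ht₀ : t₀ ∈ J) :
    ∃ Y : ℝ → Matrix (Fin 3) (Fin 3) ℝ, (∀ t ∈ J, Y t ∈ SO3) ∧
      (∀ k, ContDiffOn ℝ ∞ (fun t => (Y t)ᵀ k) J) ∧
      ∀ t ∈ J, HasDerivAt (fun t => (Y t)ᵀ 1) (g₂ t • (Y t)ᵀ 0) t ∧
        HasDerivAt (fun t => (Y t)ᵀ 2) (g₃ t • (Y t)ᵀ 0) t := by
  have hS : ContDiffOn ℝ ∞ (bishopMatrix g₂ g₃) J := by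
    simp_rw [funext (bishopMatrix_eq_smul_add_smul g₂ g₃)]
    exact (hg₂.smul contDiffOn_const).add (hg₃.smul contDiffOn_const)
  obtain ⟨Y, hYsmooth, hY, hSO⟩ := exists_rotation_frame hJ hJc hS
    (fun t _ => bishopMatrix_transpose g₂ g₃ t) ht₀
  refine ⟨Y, hSO, fun k => hYsmooth.matrix_linearMap (colLinearMap k), fun t ht => ⟨?_, ?_⟩⟩
  · refine ((hY t ht).matrix_linearMap (colLinearMap 1)).congr_deriv ?_
    ext i; simp [colLinearMap, bishopMatrix, mul_apply, Fin.sum_univ_three, mul_comm]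
  · refine ((hY t ht).matrix_linearMap (colLinearMap 2)).congr_deriv ?_
    ext i; simp [colLinearMap, bishopMatrix, mul_apply, Fin.sum_univ_three, mul_comm]

end Frame

theorem jacobian_eq_of_hasFDerivAt {x : (Fin 3 → ℝ) → (Fin 3 → ℝ)} {u : Fin 3 → ℝ}
    {L : (Fin 3 → ℝ) →L[ℝ] (Fin 3 → ℝ)} (h : HasFDerivAt x L u) :
    jacobian x u = Matrix.of fun i j => L (Pi.single j 1) i := by
  ext i j; simp [jacobian, pd, h.fderiv]

theorem jacobian_ruled {F G H : ℝ → Fin 3 → ℝ} {F' G' H' : Fin 3 → ℝ} {u : Fin 3 → ℝ}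
    (hF : HasDerivAt F F' (u 0)) (hG : HasDerivAt G G' (u 0)) (hH : HasDerivAt H H' (u 0)) :
    jacobian (fun v => F (v 0) + v 1 • G (v 0) + v 2 • H (v 0)) u =
      (Matrix.of ![F' + u 1 • G' + u 2 • H', G (u 0), H (u 0)])ᵀ := by
  have hproj : ∀ k : Fin 3,
      HasFDerivAt (fun v : Fin 3 → ℝ => v k) (ContinuousLinearMap.proj k) u :=
    fun k => hasFDerivAt_apply (𝕜 := ℝ) (F' := fun _ => ℝ) k u
  have hF' := hF.hasFDerivAt.comp u (hproj 0)
  have hG' := hG.hasFDerivAt.comp u (hproj 0)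
  have hH' := hH.hasFDerivAt.comp u (hproj 0)
  have hx : HasFDerivAt (fun v => F (v 0) + v 1 • G (v 0) + v 2 • H (v 0)) _ u :=
    (hF'.add ((hproj 1).smul hG')).add ((hproj 2).smul hH')
  rw [jacobian_eq_of_hasFDerivAt hx]
  ext i j
  fin_cases j <;> simp [Pi.single_apply]

theorem explicit_coframing_is_flat_general
    (J : Set ℝ) (hJ : IsOpen J) (hJint : J.OrdConnected)
    (g₂ g₃ : ℝ → ℝ)
    (hg₂ : ContDiffOn ℝ (⊤ : ℕ∞) g₂ J) (hg₃ : ContDiffOn ℝ (⊤ : ℕ∞) g₃ J)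
    (U : Set (Fin 3 → ℝ))
    (hUJ : ∀ u ∈ U, u 0 ∈ J)
    (hf : ∀ u ∈ U, 1 + g₂ (u 0) * u 1 + g₃ (u 0) * u 2 ≠ 0) :
    ∃ (x : (Fin 3 → ℝ) → (Fin 3 → ℝ)) (a : (Fin 3 → ℝ) → Matrix (Fin 3) (Fin 3) ℝ),
      ContDiffOn ℝ (⊤ : ℕ∞) x U ∧
      (∀ u ∈ U, IsUnit (jacobian x u).det) ∧
      (∀ i k : Fin 3, ContDiffOn ℝ (⊤ : ℕ∞) (fun u => a u i k) U) ∧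
      (∀ u ∈ U, a u ∈ SO3) ∧
      (∀ u ∈ U, Wmat a x u =
        Matrix.diagonal ![1 + g₂ (u 0) * u 1 + g₃ (u 0) * u 2, 1, 1]) := by
  rcases U.eq_empty_or_nonempty with rfl | ⟨u₀, hu₀⟩
  · exact ⟨0, 0, by simp, by simp, by simp, by simp, by simp⟩
  obtain ⟨Y, hSO, hcol, hcol'⟩ := exists_bishop_frame hJ hJint hg₂ hg₃ (hUJ u₀ hu₀)
  obtain ⟨c, hc, hc'⟩ := exists_contDiffOn_primitive hJ hJint (hcol 0) (hUJ u₀ hu₀)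
  have hproj : ∀ k : Fin 3, ContDiffOn ℝ ∞ (fun u : Fin 3 → ℝ => u k) U :=
    fun k => (contDiff_apply ℝ ℝ k).contDiffOn
  set x := fun v : Fin 3 → ℝ => c (v 0) + v 1 • (Y (v 0))ᵀ 1 + v 2 • (Y (v 0))ᵀ 2
  have hjac : ∀ u ∈ U, jacobian x u =
      Y (u 0) * diagonal ![1 + g₂ (u 0) * u 1 + g₃ (u 0) * u 2, 1, 1] := fun u hu => by
    rw [jacobian_ruled (hc' _ (hUJ u hu)) (hcol' _ (hUJ u hu)).1 (hcol' _ (hUJ u hu)).2]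
    ext i j
    fin_cases j <;> simp [mul_diagonal]
    ring
  refine ⟨x, fun u => Y (u 0), ?_, fun u hu => ?_, fun i k => ?_, fun u hu => hSO _ (hUJ u hu),
    fun u hu => ?_⟩
  · exact ((hc.comp (hproj 0) hUJ).add ((hproj 1).smul ((hcol 1).comp (hproj 0) hUJ))).add
      ((hproj 2).smul ((hcol 2).comp (hproj 0) hUJ))
  · rw [hjac u hu, det_mul, (hSO _ (hUJ u hu)).2, det_diagonal]
    simpa [Fin.prod_univ_three] using hf u hu
  · exact (contDiffOn_pi.1 (hcol k) i).comp (hproj 0) hUJ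
  · have hunit : IsUnit (Y (u 0)).det := by rw [(hSO _ (hUJ u hu)).2]; exact isUnit_one
    rw [Wmat, hjac u hu, nonsing_inv_mul_cancel_left _ _ hunit]

/-- the coframing `ω = ((1 + g₂(u¹)u² + g₃(u¹)u³) du¹, du², du³)` has
flat associated metric, i.e., it can be written as `ω = a⁻¹ dx`
(the converse claim at the end of Example 4.1 of the paper). -/
theorem explicit_coframing_is_flat
    (J : Set ℝ) (hJ : IsOpen J) (hJint : J.OrdConnected)
    (g₂ g₃ : ℝ → ℝ)
    (hg₂ : ContDiffOn ℝ (⊤ : ℕ∞) g₂ J) (hg₃ : ContDiffOn ℝ (⊤ : ℕ∞) g₃ J)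
    (U : Set (Fin 3 → ℝ)) (hU : IsOpen U) (hUconn : IsConnected U)
    (hUsc : SimplyConnectedSpace U)
    (hUJ : ∀ u ∈ U, u 0 ∈ J)
    (hf : ∀ u ∈ U, 1 + g₂ (u 0) * u 1 + g₃ (u 0) * u 2 ≠ 0) :
    ∃ (x : (Fin 3 → ℝ) → (Fin 3 → ℝ)) (a : (Fin 3 → ℝ) → Matrix (Fin 3) (Fin 3) ℝ),
      ContDiffOn ℝ (⊤ : ℕ∞) x U ∧
      (∀ u ∈ U, IsUnit (jacobian x u).det) ∧
      (∀ i k : Fin 3, ContDiffOn ℝ (⊤ : ℕ∞) (fun u => a u i k) U) ∧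
      (∀ u ∈ U, a u ∈ SO3) ∧
      (∀ u ∈ U, Wmat a x u =
        Matrix.diagonal ![1 + g₂ (u 0) * u 1 + g₃ (u 0) * u 2, 1, 1]) :=
  explicit_coframing_is_flat_general J hJ hJint g₂ g₃ hg₂ hg₃ U hUJ hf
end

section
/- Define ρ(u,v) = u² + v² and z(u,v) = (1, ρ(u,v), ρ(u,v)²) ∈ ℝ³. Let U ⊆ ℝ² be an open neighborhood of (0,0), let ũ, ṽ : U → ℝ be smooth functions with ũ(0,0) = 0 whose Jacobian determinant ∂₁ũ·∂₂ṽ − ∂₂ũ·∂₁ṽ is nonvanishing on U (so that (ũ, ṽ) is a (0,0)-centered local coordinate system), and let g : ℝ → ℝ³ be a smooth map satisfying ⟨g(ũ(p)), z(p)⟩ = 0 for all p ∈ U. Then g(0) = 0. In particular, there is no (0,0)-centered local coordinate system (ũ, ṽ) near (0,0) and nonvanishing smooth vector-valued function g(ũ) with ᵗg(ũ) z(ũ, ṽ) = 0. -/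
open Matrix

/-!
Along the level set `{ũ = 0}` the vector `g (ũ p) = g 0` is orthogonal to `(1, ρ p, ρ p ^ 2)`.
The Jacobian condition at the origin gives `dũ(0) ≠ 0`, so by the implicit function theorem
the origin is not an isolated point of this level set, and `ρ`, which vanishes only at the
origin, takes infinitely many values on it. The quadratic polynomial with coefficient vector
`g 0` therefore has infinitely many roots, so `g 0 = 0`.
-/

open Filter Topology

theorem eq_zero_of_forall_mem_sum_mul_pow_eq_zero {R : Type*} [CommRing R] [IsDomain R] {n : ℕ}
    {v : Fin n → R} {S : Set R} (hS : S.Infinite) (h : ∀ r ∈ S, ∑ i, v i * r ^ (i : ℕ) = 0) :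
    v = 0 :=
  Matrix.eq_zero_of_forall_index_sum_mul_pow_eq_zero (f := fun j => (hS.natEmbedding S j : R))
    (fun _ _ hij => Fin.val_injective <| (hS.natEmbedding S).injective <| Subtype.val_injective hij)
    (fun j => h _ (hS.natEmbedding S j).2)

theorem HasStrictFDerivAt.frequently_eq_of_range_eq_top {𝕜 : Type*} [NontriviallyNormedField 𝕜]
    [CompleteSpace 𝕜] {E : Type*} [NormedAddCommGroup E] [NormedSpace 𝕜 E] [CompleteSpace E]
    {F : Type*} [NormedAddCommGroup F] [NormedSpace 𝕜 F] [FiniteDimensional 𝕜 F]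
    {f : E → F} {f' : E →L[𝕜] F} {a : E} (hf : HasStrictFDerivAt f f' a)
    (hf' : f'.range = ⊤) (hker : f'.ker ≠ ⊥) : ∃ᶠ x in 𝓝[≠] a, f x = f a := by
  have : Nontrivial f'.ker := Submodule.nontrivial_iff_ne_bot.2 hker
  obtain ⟨k, hk0⟩ := exists_ne (0 : f'.ker)
  set γ : 𝕜 → E := fun t => hf.implicitFunction f f' hf' (f a) (t • k)
  have hγ0 : γ 0 = a := by simp [γ]
  have hγ : HasDerivAt γ (k : E) 0 :=
    (hf.to_implicitFunction hf').hasFDerivAt.comp_hasDerivAt_of_eq (0 : 𝕜)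
      ((hasDerivAt_id (0 : 𝕜)).smul_const k |>.congr_deriv (one_smul 𝕜 k)) (zero_smul 𝕜 k).symm
  have hlevel : ∀ᶠ t in 𝓝 (0 : 𝕜), f (γ t) = f a :=
    (continuous_const.prodMk (continuous_id.smul continuous_const)).tendsto' (0 : 𝕜) (f a, 0)
      (by simp) |>.eventually (hf.map_implicitFunction_eq hf')
  have htend : Tendsto γ (𝓝[≠] 0) (𝓝[≠] a) := hγ0 ▸ hγ.tendsto_nhdsNE (by simpa using hk0)
  exact htend.frequently (hlevel.filter_mono nhdsWithin_le_nhds).frequently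

theorem Set.Infinite.image_of_tendsto_nhdsNE {X Y : Type*} [TopologicalSpace X]
    [TopologicalSpace Y] [T1Space Y] {h : X → Y} {a : X} {b : Y} {S : Set X}
    (hh : Tendsto h (𝓝[≠] a) (𝓝[≠] b)) (hS : ∃ᶠ x in 𝓝[≠] a, x ∈ S) : (h '' S).Infinite :=
  Set.Infinite.of_accPt <| accPt_iff_frequently_nhdsNE.2 <|
    hh.frequently (hS.mono fun _ hx => Set.mem_image_of_mem h hx)

theorem tendsto_sq_add_sq_nhdsNE :
    Tendsto (fun p : Fin 2 → ℝ => p 0 ^ 2 + p 1 ^ 2) (𝓝[≠] 0) (𝓝[≠] 0) := by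
  refine tendsto_nhdsWithin_of_tendsto_nhds_of_eventually_within _ ?_ ?_
  · exact (Continuous.tendsto' (by fun_prop) 0 0 (by simp)).mono_left nhdsWithin_le_nhds
  · filter_upwards [self_mem_nhdsWithin] with p hp
    contrapose! hp
    simp only [Set.mem_compl_iff, Set.mem_singleton_iff, not_not] at hp ⊢
    have h0 : p 0 = 0 := by nlinarith [sq_nonneg (p 0), sq_nonneg (p 1)]
    have h1 : p 1 = 0 := by nlinarith [sq_nonneg (p 0), sq_nonneg (p 1)]
    exact funext fun i => by fin_cases i <;> assumption

theorem fderiv_ne_zero_of_jacobian_ne_zero {u v : (Fin 2 → ℝ) → ℝ} {p : Fin 2 → ℝ}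
    (hjac : pd 0 u p * pd 1 v p - pd 1 u p * pd 0 v p ≠ 0) : fderiv ℝ u p ≠ 0 := by
  intro h
  simp [pd, h] at hjac

theorem critical_point_obstruction_general
    (U : Set (Fin 2 → ℝ)) (hU : IsOpen U) (h0 : (0 : Fin 2 → ℝ) ∈ U)
    (ut vt : (Fin 2 → ℝ) → ℝ)
    (hut : ContDiffOn ℝ (⊤ : ℕ∞) ut U)
    (hu0 : ut 0 = 0)
    (hjac : ∀ p ∈ U, pd 0 ut p * pd 1 vt p - pd 1 ut p * pd 0 vt p ≠ 0)
    (g : ℝ → Fin 3 → ℝ)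
    (horth : ∀ p ∈ U,
      g (ut p) ⬝ᵥ
        ![1, (p 0) ^ 2 + (p 1) ^ 2, ((p 0) ^ 2 + (p 1) ^ 2) ^ 2] = 0) :
    g 0 = 0 := by
  have hstrict : HasStrictFDerivAt ut (fderiv ℝ ut 0) 0 :=
    (hut.contDiffAt (hU.mem_nhds h0)).hasStrictFDerivAt (by simp)
  have hsurj : (fderiv ℝ ut 0).range = ⊤ := Module.Dual.range_eq_top_of_ne_zero
    (ContinuousLinearMap.coe_injective.ne (fderiv_ne_zero_of_jacobian_ne_zero (hjac 0 h0)))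
  have hzeros : ∃ᶠ p in 𝓝[≠] 0, ut p = 0 := by
    simpa [hu0] using hstrict.frequently_eq_of_range_eq_top hsurj
      (LinearMap.ker_ne_bot_of_finrank_lt (by simp))
  have hZ : ∃ᶠ p in 𝓝[≠] 0, p ∈ {p | p ∈ U ∧ ut p = 0} :=
    Eventually.and_frequently (mem_nhdsWithin_of_mem_nhds (hU.mem_nhds h0)) hzeros
  refine eq_zero_of_forall_mem_sum_mul_pow_eq_zero
    (Set.Infinite.image_of_tendsto_nhdsNE tendsto_sq_add_sq_nhdsNE hZ) ?_
  rintro _ ⟨p, ⟨hpU, hp⟩, rfl⟩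
  simpa [hp, dotProduct, Fin.sum_univ_three, mul_comm] using horth p hpU

/-- Example 4.10 of the paper. For `ρ(u,v) = u² + v²` and
`z = (1, ρ, ρ²)`, there is no centered local coordinate system `(ũ, ṽ)` near the
origin and function `g(ũ)` with `⟨g(ũ), z⟩ = 0` unless `g(0) = 0`. -/
theorem critical_point_obstruction
    (U : Set (Fin 2 → ℝ)) (hU : IsOpen U) (h0 : (0 : Fin 2 → ℝ) ∈ U)
    (ut vt : (Fin 2 → ℝ) → ℝ)
    (hut : ContDiffOn ℝ (⊤ : ℕ∞) ut U) (hvt : ContDiffOn ℝ (⊤ : ℕ∞) vt U)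
    (hu0 : ut 0 = 0)
    (hjac : ∀ p ∈ U, pd 0 ut p * pd 1 vt p - pd 1 ut p * pd 0 vt p ≠ 0)
    (g : ℝ → Fin 3 → ℝ) (hg : ContDiff ℝ (⊤ : ℕ∞) g)
    (horth : ∀ p ∈ U,
      g (ut p) ⬝ᵥ
        ![1, (p 0) ^ 2 + (p 1) ^ 2, ((p 0) ^ 2 + (p 1) ^ 2) ^ 2] = 0) :
    g 0 = 0 :=
  critical_point_obstruction_general U hU h0 ut vt hut hu0 hjac g horth
end
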